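/- Let C be an oriented linear chord diagram of d chords and let 0 ≤ ℓ ≤ 2d. Then ⟨C_+^ℓ⟩ = (−A³)·⟨C⟩, where C_+^ℓ is the diagram of d+1 chords obtained from C by replacing every entry i of a chord by i if i ≤ ℓ and by i+2 if i > ℓ, and adjoining the positive chord (ℓ+1, ℓ+2). -/

import Mathlib

open Equiv LaurentPolynomial Finset

/-- `C` is an oriented linear chord diagram of `d` chords: a set of `d` ordered pairs of
integers whose entries (first and second components together) are exactly `{1, …, 2d}`.
(Together with `C.card = d` this forces all `2d` entries to be pairwise distinct.) -/
def IsOLCD (d : ℕ) (C : Finset (ℤ × ℤ)) : Prop :=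
  C.card = d ∧ (C.image Prod.fst ∪ C.image Prod.snd) = Finset.Icc 1 (2 * (d : ℤ))

/-- The set `R_c` of transpositions of `ℤ` associated to a chord `c = (i, j)` carrying the
label `lbl` (`true` = `A`, `false` = `B`). -/
def Rset (lbl : Bool) (c : ℤ × ℤ) : Set (Equiv.Perm ℤ) :=
  if lbl = decide (c.1 < c.2) then
    {Equiv.swap c.1 (c.2 - 1), Equiv.swap (c.1 - 1) c.2}
  else
    {Equiv.swap c.1 c.2, Equiv.swap (c.1 - 1) (c.2 - 1)}

/-- The subgroup of permutations generated by `⋃_{c ∈ C} R_c`, for a state `s` of `C`. -/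
def stateGroup (C : Finset (ℤ × ℤ)) (s : {c // c ∈ C} → Bool) : Subgroup (Equiv.Perm ℤ) :=
  Subgroup.closure (⋃ c : {c // c ∈ C}, Rset (s c) c.1)

/-- `Γ_s`: the number of orbits of the action of `stateGroup C s` on `{0, 1, …, 2d}`,
counted as the number of distinct orbits of elements of `{0, …, 2d}`. -/
noncomputable def Gamma (d : ℕ) (C : Finset (ℤ × ℤ)) (s : {c // c ∈ C} → Bool) : ℕ :=
  ((fun x : ℤ => MulAction.orbit (stateGroup C s) x) '' Set.Icc (0 : ℤ) (2 * d)).ncard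

/-- `⟨C|s⟩ = A^(|s⁻¹(A)| - |s⁻¹(B)|) * (-A² - A⁻²)^(Γ_s - 1)`. -/
noncomputable def bracketTerm (d : ℕ) (C : Finset (ℤ × ℤ)) (s : {c // c ∈ C} → Bool) :
    LaurentPolynomial ℤ :=
  T (((Finset.univ.filter fun c => s c = true).card : ℤ) -
      ((Finset.univ.filter fun c => s c = false).card : ℤ)) *
    (-T 2 - T (-2)) ^ (Gamma d C s - 1)

/-- The bracket polynomial `⟨C⟩ = Σ_s ⟨C|s⟩`, summing over all `2^d` states of `C`. -/
noncomputable def bracket (d : ℕ) (C : Finset (ℤ × ℤ)) : LaurentPolynomial ℤ :=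
  ∑ s : ({c // c ∈ C} → Bool), bracketTerm d C s

/-- The maximal exponent occurring in a Laurent polynomial (junk value `0` for `f = 0`). -/
noncomputable def maxDeg (f : LaurentPolynomial ℤ) : ℤ := f.coeff.support.max.unbotD 0

/-- The minimal exponent occurring in a Laurent polynomial (junk value `0` for `f = 0`). -/
noncomputable def minDeg (f : LaurentPolynomial ℤ) : ℤ := f.coeff.support.min.untopD 0

/-- The span of a Laurent polynomial: maximal minus minimal exponent. -/
noncomputable def spanL (f : LaurentPolynomial ℤ) : ℤ := maxDeg f - minDeg f

/-! Split each state of `C₊^ℓ` by its label `b` on the new chord `(ℓ+1, ℓ+2)`. The shift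
`x ↦ x` (`x ≤ ℓ`), `x ↦ x + 2` (`x > ℓ`) identifies the orbits of a state `s` of `C` with the
orbits of the extended state that meet the shifted positions; the collapse of `ℓ+1, ℓ+2` onto `ℓ`
gives the converse. The new chord glues `ℓ+2` to `ℓ` for either label, and no shifted chord moves
`ℓ+1`. So for `b = A` the point `ℓ+1` is a new singleton orbit and `Γ` grows by one, while for
`b = B` it is glued to `ℓ` and `Γ` is unchanged. The two terms then combine by
`A·(-A²-A⁻²) + A⁻¹ = -A³`. -/

open MulAction Subgroup

local notation "δ" => (-T 2 - T (-2) : LaurentPolynomial ℤ)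

section OrbitMaps

variable {α β : Type*} {S : Set (Perm α)} {H : Subgroup (Perm β)} {f : α → β}

theorem orbit_map_apply_eq_of_mem_closure
    (hS : ∀ σ ∈ S, ∀ x, orbit H (f (σ x)) = orbit H (f x))
    {g : Perm α} (hg : g ∈ closure S) (x : α) : orbit H (f (g x)) = orbit H (f x) := by
  induction hg using closure_induction generalizing x with
  | mem σ hσ => exact hS σ hσ x
  | one => rfl
  | mul g h _ _ ihg ihh => rw [Perm.mul_apply, ihg, ihh]
  | inv g _ ih => rw [← ih (g⁻¹ x), Perm.coe_inv, apply_symm_apply]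

theorem orbit_map_eq_of_orbit_closure_eq
    (hS : ∀ σ ∈ S, ∀ x, orbit H (f (σ x)) = orbit H (f x))
    {x y : α} (h : orbit (closure S) x = orbit (closure S) y) : orbit H (f x) = orbit H (f y) := by
  obtain ⟨⟨g, hg⟩, rfl⟩ := orbit_eq_iff.mp h
  exact orbit_map_apply_eq_of_mem_closure hS hg y

theorem orbit_map_swap_apply [DecidableEq α] {u v : α} (h : orbit H (f u) = orbit H (f v))
    (x : α) : orbit H (f (swap u v x)) = orbit H (f x) := by
  rcases eq_or_ne x u with rfl | hu
  · rw [swap_apply_left, h]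
  rcases eq_or_ne x v with rfl | hv
  · rw [swap_apply_right, h]
  · rw [swap_apply_of_ne_of_ne hu hv]

theorem orbit_eq_of_swap_mem {H : Subgroup (Perm α)} [DecidableEq α] {u v : α}
    (h : swap u v ∈ H) : orbit H u = orbit H v :=
  (orbit_eq_iff.mpr ⟨⟨_, h⟩, swap_apply_left u v⟩).symm

end OrbitMaps

theorem Set.ncard_image_eq_of_eq_iff {α β γ : Type*} {A : Set α} {f : α → β} {g : α → γ}
    (h : ∀ x ∈ A, ∀ y ∈ A, f x = f y ↔ g x = g y) : (f '' A).ncard = (g '' A).ncard := by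
  let P := (fun x => (f x, g x)) '' A
  have hfst : (Prod.fst '' P).ncard = P.ncard := Set.InjOn.ncard_image <| by
    rintro _ ⟨x, hx, rfl⟩ _ ⟨y, hy, rfl⟩ hxy
    exact Prod.ext hxy ((h x hx y hy).mp hxy)
  have hsnd : (Prod.snd '' P).ncard = P.ncard := Set.InjOn.ncard_image <| by
    rintro _ ⟨x, hx, rfl⟩ _ ⟨y, hy, rfl⟩ hxy
    exact Prod.ext ((h x hx y hy).mpr hxy) hxy
  calc (f '' A).ncard = (Prod.fst '' P).ncard := by rw [Set.image_image]
    _ = (Prod.snd '' P).ncard := hfst.trans hsnd.symm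
    _ = (g '' A).ncard := by rw [Set.image_image]

section Chords

def shiftAbove (ℓ x : ℤ) : ℤ := if x ≤ ℓ then x else x + 2

def collapseGap (ℓ x : ℤ) : ℤ := if x ≤ ℓ then x else if x ≤ ℓ + 2 then ℓ else x - 2

def shiftChord (ℓ : ℤ) (p : ℤ × ℤ) : ℤ × ℤ := (shiftAbove ℓ p.1, shiftAbove ℓ p.2)

variable {ℓ : ℤ}

theorem shiftAbove_of_le {x : ℤ} (h : x ≤ ℓ) : shiftAbove ℓ x = x := if_pos h

theorem shiftAbove_of_lt {x : ℤ} (h : ℓ < x) : shiftAbove ℓ x = x + 2 := if_neg (not_le.mpr h)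

theorem shiftAbove_strictMono : StrictMono (shiftAbove ℓ) := by
  intro x y h; unfold shiftAbove; split_ifs <;> omega

theorem shiftAbove_ne (x : ℤ) : ℓ + 1 ≠ shiftAbove ℓ x := by
  unfold shiftAbove; split_ifs <;> omega

theorem shiftAbove_sub_one_ne (x : ℤ) : ℓ + 1 ≠ shiftAbove ℓ x - 1 := by
  unfold shiftAbove; split_ifs <;> omega

theorem collapseGap_shiftAbove (x : ℤ) : collapseGap ℓ (shiftAbove ℓ x) = x := by
  unfold collapseGap shiftAbove; split_ifs <;> omega

theorem collapseGap_shiftAbove_sub_one (x : ℤ) :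
    collapseGap ℓ (shiftAbove ℓ x - 1) = x - 1 := by
  unfold collapseGap shiftAbove; split_ifs <;> omega

theorem shiftChord_injective : Function.Injective (shiftChord ℓ) := fun _ _ h =>
  Prod.ext (shiftAbove_strictMono.injective (congrArg Prod.fst h))
    (shiftAbove_strictMono.injective (congrArg Prod.snd h))

theorem Rset_monogon (b : Bool) :
    Rset b (ℓ + 1, ℓ + 2) =
      if b then {1, swap ℓ (ℓ + 2)} else {swap (ℓ + 1) (ℓ + 2), swap ℓ (ℓ + 1)} := by
  have h₁ : ℓ + 1 - 1 = ℓ := by ring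
  have h₂ : ℓ + 2 - 1 = ℓ + 1 := by ring
  cases b <;> simp [Rset, h₁, h₂, swap_self, Perm.one_def]

end Chords

section RsetOrbits

variable {H : Subgroup (Perm ℤ)} {lbl : Bool}

theorem orbit_map_apply_eq_of_mem_Rset {f : ℤ → ℤ} {c c' : ℤ × ℤ}
    (hlt : c'.1 < c'.2 ↔ c.1 < c.2) (hH : Rset lbl c' ⊆ H)
    (h₁ : orbit H (f c.1) = orbit H c'.1) (h₁' : orbit H (f (c.1 - 1)) = orbit H (c'.1 - 1))
    (h₂ : orbit H (f c.2) = orbit H c'.2) (h₂' : orbit H (f (c.2 - 1)) = orbit H (c'.2 - 1))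
    {σ : Perm ℤ} (hσ : σ ∈ Rset lbl c) (x : ℤ) : orbit H (f (σ x)) = orbit H (f x) := by
  have hswap : ∀ {u v u' v' : ℤ}, swap u' v' ∈ H → orbit H (f u) = orbit H u' →
      orbit H (f v) = orbit H v' → orbit H (f (swap u v x)) = orbit H (f x) :=
    fun hH' hu hv => orbit_map_swap_apply (by rw [hu, hv, orbit_eq_of_swap_mem hH']) x
  have hdec : decide (c'.1 < c'.2) = decide (c.1 < c.2) := decide_eq_decide.mpr hlt
  unfold Rset at hσ hH
  rw [hdec] at hH
  split_ifs at hσ hH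
  · rcases hσ with rfl | rfl
    · exact hswap (hH (Or.inl rfl)) h₁ h₂'
    · exact hswap (hH (Or.inr rfl)) h₁' h₂
  · rcases hσ with rfl | rfl
    · exact hswap (hH (Or.inl rfl)) h₁ h₂
    · exact hswap (hH (Or.inr rfl)) h₁' h₂'

theorem apply_eq_of_mem_Rset {c : ℤ × ℤ} {a : ℤ} (h₁ : a ≠ c.1) (h₁' : a ≠ c.1 - 1)
    (h₂ : a ≠ c.2) (h₂' : a ≠ c.2 - 1) {σ : Perm ℤ} (hσ : σ ∈ Rset lbl c) : σ a = a := by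
  unfold Rset at hσ
  split_ifs at hσ <;> rcases hσ with rfl | rfl <;> exact swap_apply_of_ne_of_ne ‹_› ‹_›

end RsetOrbits

section ChordGroup

variable {ι : Type*}

def chordGroup (s : ι → Bool) (c : ι → ℤ × ℤ) : Subgroup (Perm ℤ) :=
  closure (⋃ i, Rset (s i) (c i))

def withMonogon (ℓ : ℤ) (c : ι → ℤ × ℤ) : Option ι → ℤ × ℤ :=
  fun o => o.elim (ℓ + 1, ℓ + 2) (shiftChord ℓ ∘ c)

theorem withMonogon_injective {ℓ : ℤ} {c : ι → ℤ × ℤ} (hc : Function.Injective c) :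
    Function.Injective (withMonogon ℓ c) := by
  have hne : ∀ p : ℤ × ℤ, shiftChord ℓ p ≠ (ℓ + 1, ℓ + 2) :=
    fun p h => shiftAbove_ne p.1 (congrArg Prod.fst h).symm
  rintro (_ | i) (_ | j) h
  · rfl
  · exact absurd h.symm (hne _)
  · exact absurd h (hne _)
  · exact congrArg some (hc (shiftChord_injective h))

theorem Rset_subset_chordGroup (s : ι → Bool) (c : ι → ℤ × ℤ) (i : ι) :
    Rset (s i) (c i) ⊆ chordGroup s c :=
  fun _ hσ => subset_closure (Set.mem_iUnion_of_mem i hσ)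

variable (t : Option ι → Bool) (c : ι → ℤ × ℤ) {ℓ : ℤ}

theorem Rset_monogon_subset_chordGroup :
    Rset (t none) (ℓ + 1, ℓ + 2) ⊆ chordGroup t (withMonogon ℓ c) :=
  Rset_subset_chordGroup t (withMonogon ℓ c) none

theorem orbit_add_two_eq_orbit_withMonogon :
    orbit (chordGroup t (withMonogon ℓ c)) (ℓ + 2) =
      orbit (chordGroup t (withMonogon ℓ c)) ℓ := by
  have h := Rset_monogon_subset_chordGroup t c (ℓ := ℓ)
  rw [Rset_monogon] at h
  split_ifs at h
  · exact (orbit_eq_of_swap_mem (h (Or.inr rfl))).symm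
  · exact (orbit_eq_of_swap_mem (h (Or.inl rfl))).symm.trans
      (orbit_eq_of_swap_mem (h (Or.inr rfl))).symm

theorem orbit_succ_eq_orbit_withMonogon (ht : t none = false) :
    orbit (chordGroup t (withMonogon ℓ c)) (ℓ + 1) =
      orbit (chordGroup t (withMonogon ℓ c)) ℓ := by
  have h := Rset_monogon_subset_chordGroup t c (ℓ := ℓ)
  rw [Rset_monogon, ht] at h
  exact (orbit_eq_of_swap_mem (h (Or.inr rfl))).symm

theorem eq_of_mem_orbit_succ_withMonogon (ht : t none = true) {y : ℤ}
    (hy : y ∈ orbit (chordGroup t (withMonogon ℓ c)) (ℓ + 1)) : y = ℓ + 1 := by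
  have hfix : chordGroup t (withMonogon ℓ c) ≤ stabilizer (Perm ℤ) (ℓ + 1) := by
    refine closure_le _ |>.mpr fun σ hσ => mem_stabilizer_iff.mpr ?_
    obtain ⟨o, ho⟩ := Set.mem_iUnion.mp hσ
    cases o with
    | none =>
      change σ ∈ Rset (t none) (ℓ + 1, ℓ + 2) at ho
      rw [Rset_monogon, ht, if_pos rfl] at ho
      rcases ho with rfl | rfl
      · rfl
      · exact swap_apply_of_ne_of_ne (by omega) (by omega)
    | some i =>
      exact apply_eq_of_mem_Rset (shiftAbove_ne _) (shiftAbove_sub_one_ne _)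
        (shiftAbove_ne _) (shiftAbove_sub_one_ne _) ho
  obtain ⟨g, rfl⟩ := hy
  exact mem_stabilizer_iff.mp (hfix g.2)

theorem orbit_shiftAbove_sub_one_withMonogon (x : ℤ) :
    orbit (chordGroup t (withMonogon ℓ c)) (shiftAbove ℓ (x - 1)) =
      orbit (chordGroup t (withMonogon ℓ c)) (shiftAbove ℓ x - 1) := by
  -- `shiftAbove` commutes with `· - 1` except at `ℓ + 1`, where the new chord bridges the gap.
  by_cases hx : x = ℓ + 1
  · subst hx
    rw [add_sub_cancel_right, shiftAbove_of_le le_rfl, shiftAbove_of_lt (lt_add_one ℓ),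
      show ℓ + 1 + 2 - 1 = ℓ + 2 by ring, orbit_add_two_eq_orbit_withMonogon]
  · congr 1
    unfold shiftAbove
    split_ifs <;> omega

theorem orbit_collapseGap_eq_of_orbit_eq_withMonogon {x y : ℤ}
    (h : orbit (chordGroup t (withMonogon ℓ c)) x = orbit (chordGroup t (withMonogon ℓ c)) y) :
    orbit (chordGroup (t ∘ some) c) (collapseGap ℓ x) =
      orbit (chordGroup (t ∘ some) c) (collapseGap ℓ y) := by
  refine orbit_map_eq_of_orbit_closure_eq (fun σ hσ z => ?_) h
  obtain ⟨o, ho⟩ := Set.mem_iUnion.mp hσ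
  cases o with
  | none =>
    change σ ∈ Rset (t none) (ℓ + 1, ℓ + 2) at ho
    rw [Rset_monogon] at ho
    split_ifs at ho <;> rcases ho with rfl | rfl
    all_goals first
      | rfl
      | exact orbit_map_swap_apply (by simp [collapseGap]) z
  | some i =>
    refine orbit_map_apply_eq_of_mem_Rset (c' := c i) shiftAbove_strictMono.lt_iff_lt.symm
      (Rset_subset_chordGroup (t ∘ some) c i) ?_ ?_ ?_ ?_ ho z <;>
    simp only [withMonogon, Option.elim, Function.comp, shiftChord, collapseGap_shiftAbove,
      collapseGap_shiftAbove_sub_one]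

theorem orbit_shiftAbove_eq_iff_withMonogon {x y : ℤ} :
    orbit (chordGroup t (withMonogon ℓ c)) (shiftAbove ℓ x) =
        orbit (chordGroup t (withMonogon ℓ c)) (shiftAbove ℓ y) ↔
      orbit (chordGroup (t ∘ some) c) x = orbit (chordGroup (t ∘ some) c) y := by
  refine ⟨fun h => ?_, fun h => ?_⟩
  · simpa only [collapseGap_shiftAbove] using orbit_collapseGap_eq_of_orbit_eq_withMonogon t c h
  · refine orbit_map_eq_of_orbit_closure_eq (fun σ hσ z => ?_) h
    obtain ⟨i, hi⟩ := Set.mem_iUnion.mp hσ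
    exact orbit_map_apply_eq_of_mem_Rset (c' := shiftChord ℓ (c i))
      shiftAbove_strictMono.lt_iff_lt (Rset_subset_chordGroup t (withMonogon ℓ c) (some i))
      rfl (orbit_shiftAbove_sub_one_withMonogon t c _) rfl
      (orbit_shiftAbove_sub_one_withMonogon t c _) hi z

end ChordGroup

section OrbitCount

variable {ι : Type*} (t : Option ι → Bool) (c : ι → ℤ × ℤ) {ℓ : ℤ} {n : ℕ}

theorem exists_orbit_shiftAbove_eq_withMonogon (hℓ0 : 0 ≤ ℓ) (hℓ : ℓ ≤ 2 * n) {p : ℤ}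
    (hp : p ∈ Set.Icc 0 (2 * ((n + 1 : ℕ) : ℤ))) (hp₁ : p ≠ ℓ + 1) :
    ∃ x ∈ Set.Icc 0 (2 * (n : ℤ)),
      orbit (chordGroup t (withMonogon ℓ c)) (shiftAbove ℓ x) =
        orbit (chordGroup t (withMonogon ℓ c)) p := by
  simp only [Set.mem_Icc, Nat.cast_add, Nat.cast_one] at hp ⊢
  rcases lt_trichotomy p (ℓ + 2) with hlt | rfl | hgt
  · exact ⟨p, by omega, by rw [shiftAbove_of_le (by omega)]⟩
  · refine ⟨ℓ, ⟨hℓ0, hℓ⟩, ?_⟩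
    rw [shiftAbove_of_le le_rfl, orbit_add_two_eq_orbit_withMonogon]
  · exact ⟨p - 2, by omega, by rw [shiftAbove_of_lt (by omega), sub_add_cancel]⟩

theorem ncard_orbits_withMonogon (hℓ0 : 0 ≤ ℓ) (hℓ : ℓ ≤ 2 * n) :
    ((fun x => orbit (chordGroup t (withMonogon ℓ c)) x) ''
        Set.Icc 0 (2 * ((n + 1 : ℕ) : ℤ))).ncard =
      ((fun x => orbit (chordGroup (t ∘ some) c) x) '' Set.Icc 0 (2 * (n : ℤ))).ncard +
        if t none then 1 else 0 := by
  set G := chordGroup t (withMonogon ℓ c)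
  have himage : (fun x => orbit G x) '' Set.Icc 0 (2 * ((n + 1 : ℕ) : ℤ)) =
      insert (orbit G (ℓ + 1))
        ((fun x => orbit G (shiftAbove ℓ x)) '' Set.Icc 0 (2 * (n : ℤ))) := by
    ext O
    constructor
    · rintro ⟨p, hp, rfl⟩
      by_cases hp₁ : p = ℓ + 1
      · exact Or.inl (congrArg _ hp₁)
      · exact Or.inr (exists_orbit_shiftAbove_eq_withMonogon t c hℓ0 hℓ hp hp₁)
    · rintro (rfl | ⟨x, hx, rfl⟩)
      · exact ⟨ℓ + 1, by simp only [Set.mem_Icc]; push_cast; omega, rfl⟩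
      · refine ⟨shiftAbove ℓ x, ?_, rfl⟩
        simp only [Set.mem_Icc] at hx ⊢
        unfold shiftAbove
        push_cast
        split_ifs <;> omega
  have hcount : ((fun x => orbit G (shiftAbove ℓ x)) '' Set.Icc 0 (2 * (n : ℤ))).ncard =
      ((fun x => orbit (chordGroup (t ∘ some) c) x) '' Set.Icc 0 (2 * (n : ℤ))).ncard :=
    Set.ncard_image_eq_of_eq_iff fun _ _ _ _ => orbit_shiftAbove_eq_iff_withMonogon t c
  rw [himage]
  cases ht : t none
  · have hmem :
        orbit G (ℓ + 1) ∈ (fun x => orbit G (shiftAbove ℓ x)) '' Set.Icc 0 (2 * (n : ℤ)) :=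
      ⟨ℓ, ⟨hℓ0, hℓ⟩, (congrArg _ (shiftAbove_of_le le_rfl)).trans
        (orbit_succ_eq_orbit_withMonogon t c ht).symm⟩
    rw [Set.insert_eq_of_mem hmem, hcount, if_neg Bool.false_ne_true, add_zero]
  · rw [Set.ncard_insert_of_notMem, hcount, if_pos rfl]
    rintro ⟨x, -, hx⟩
    refine shiftAbove_ne (ℓ := ℓ) x (eq_of_mem_orbit_succ_withMonogon t c ht ?_).symm
    exact hx ▸ mem_orbit_self _

end OrbitCount

section States

def addMonogon (ℓ : ℤ) (C : Finset (ℤ × ℤ)) : Finset (ℤ × ℤ) :=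
  insert (ℓ + 1, ℓ + 2) (C.image (shiftChord ℓ))

variable {ℓ : ℤ} {C : Finset (ℤ × ℤ)}

def monogonChord (ℓ : ℤ) (C : Finset (ℤ × ℤ)) :
    Option {c // c ∈ C} → {c // c ∈ addMonogon ℓ C}
  | none => ⟨(ℓ + 1, ℓ + 2), mem_insert_self _ _⟩
  | some p => ⟨shiftChord ℓ p, mem_insert_of_mem (mem_image_of_mem _ p.2)⟩

theorem coe_monogonChord (o : Option {c // c ∈ C}) :
    (monogonChord ℓ C o : ℤ × ℤ) = withMonogon ℓ Subtype.val o := by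
  cases o <;> rfl

theorem monogonChord_bijective : Function.Bijective (monogonChord ℓ C) := by
  refine ⟨fun o o' h => withMonogon_injective (ℓ := ℓ) Subtype.val_injective ?_,
    fun ⟨c, hc⟩ => ?_⟩
  · rw [← coe_monogonChord, ← coe_monogonChord, h]
  · rcases mem_insert.mp hc with rfl | hc
    · exact ⟨none, rfl⟩
    · obtain ⟨p, hp, rfl⟩ := mem_image.mp hc
      exact ⟨some ⟨p, hp⟩, rfl⟩

noncomputable def monogonChordEquiv (ℓ : ℤ) (C : Finset (ℤ × ℤ)) :
    Option {c // c ∈ C} ≃ {c // c ∈ addMonogon ℓ C} :=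
  Equiv.ofBijective _ monogonChord_bijective

theorem stateGroup_addMonogon (t : Option {c // c ∈ C} → Bool) :
    stateGroup (addMonogon ℓ C) (t ∘ (monogonChordEquiv ℓ C).symm) =
      chordGroup t (withMonogon ℓ Subtype.val) := by
  rw [stateGroup, chordGroup, ← (monogonChordEquiv ℓ C).surjective.iUnion_comp]
  simp only [Function.comp_apply, Equiv.symm_apply_apply]
  congr! with o
  exact coe_monogonChord o

theorem gamma_addMonogon {d : ℕ} (hℓ0 : 0 ≤ ℓ) (hℓ : ℓ ≤ 2 * d)
    (t : Option {c // c ∈ C} → Bool) :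
    Gamma (d + 1) (addMonogon ℓ C) (t ∘ (monogonChordEquiv ℓ C).symm) =
      Gamma d C (t ∘ some) + if t none then 1 else 0 := by
  rw [Gamma, stateGroup_addMonogon]
  exact ncard_orbits_withMonogon t Subtype.val hℓ0 hℓ

theorem one_le_gamma (d : ℕ) (C : Finset (ℤ × ℤ)) (s : {c // c ∈ C} → Bool) :
    1 ≤ Gamma d C s :=
  (Set.ncard_pos ((Set.finite_Icc _ _).image _)).mpr
    ((Set.nonempty_Icc.mpr (by positivity)).image _)

end States

theorem card_filter_true_sub_card_filter_false {ι : Type*} [Fintype ι] (s : ι → Bool) :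
    ((univ.filter fun i => s i = true).card : ℤ) - (univ.filter fun i => s i = false).card =
      ∑ i, if s i then 1 else -1 := by
  rw [card_filter, card_filter]
  push_cast
  rw [← sum_sub_distrib]
  refine sum_congr rfl fun i _ => ?_
  cases s i <;> simp

theorem bracketTerm_eq (d : ℕ) (C : Finset (ℤ × ℤ)) (s : {c // c ∈ C} → Bool) :
    bracketTerm d C s =
      T (∑ c, if s c then 1 else -1) * δ ^ (Gamma d C s - 1) := by
  rw [bracketTerm, card_filter_true_sub_card_filter_false]

theorem sum_states_addMonogon {M : Type*} [AddCommMonoid M] {ℓ : ℤ} {C : Finset (ℤ × ℤ)}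
    (F : ({c // c ∈ addMonogon ℓ C} → Bool) → M) :
    ∑ s', F s' = ∑ s : {c // c ∈ C} → Bool, ∑ b : Bool,
      F ((·.elim b s) ∘ (monogonChordEquiv ℓ C).symm) := by
  rw [← ((monogonChordEquiv ℓ C).arrowCongr (Equiv.refl Bool)).sum_comp,
    ← Equiv.piOptionEquivProd.symm.sum_comp, Fintype.sum_prod_type_right]
  refine sum_congr rfl fun s _ => sum_congr rfl fun b _ => congrArg F (funext fun c => ?_)
  obtain ⟨o, rfl⟩ := (monogonChordEquiv ℓ C).surjective c
  simp only [Equiv.arrowCongr_apply, Function.comp_apply, Equiv.symm_apply_apply]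
  cases o <;> rfl

theorem bracketTerm_addMonogon {d : ℕ} {ℓ : ℤ} {C : Finset (ℤ × ℤ)} (hℓ0 : 0 ≤ ℓ)
    (hℓ : ℓ ≤ 2 * d) (s : {c // c ∈ C} → Bool) (b : Bool) :
    bracketTerm (d + 1) (addMonogon ℓ C) ((·.elim b s) ∘ (monogonChordEquiv ℓ C).symm) =
      T ((∑ c, if s c then 1 else -1) + if b then 1 else -1) *
        δ ^ (Gamma d C s + (if b then 1 else 0) - 1) := by
  rw [bracketTerm_eq, gamma_addMonogon hℓ0 hℓ, add_comm (∑ c, _)]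
  simp only [Function.comp_apply]
  rw [Equiv.sum_comp (monogonChordEquiv ℓ C).symm (fun o => if o.elim b s then (1 : ℤ) else -1),
    Fintype.sum_option]
  rfl

theorem T_add_one_mul_loop_pow_add (k : ℤ) (m : ℕ) :
    T (k + 1) * δ ^ (m + 1) + T (k - 1) * δ ^ m = -T 3 * (T k * δ ^ m) := by
  have h₁ : (T (k + 1) : LaurentPolynomial ℤ) * T 2 = T k * T 3 := by
    rw [← T_add, ← T_add, add_assoc]; norm_num
  have h₂ : (T (k + 1) : LaurentPolynomial ℤ) * T (-2) = T (k - 1) := by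
    rw [← T_add]; ring_nf
  linear_combination (-δ ^ m) * h₁ + (-δ ^ m) * h₂

theorem bracket_addMonogon {d : ℕ} {C : Finset (ℤ × ℤ)} {ℓ : ℤ} (hℓ0 : 0 ≤ ℓ)
    (hℓ : ℓ ≤ 2 * d) : bracket (d + 1) (addMonogon ℓ C) = -T 3 * bracket d C := by
  rw [bracket, bracket, sum_states_addMonogon, mul_sum]
  refine sum_congr rfl fun s _ => ?_
  obtain ⟨m, hm⟩ : ∃ m, Gamma d C s = m + 1 := Nat.exists_eq_add_of_le' (one_le_gamma d C s)
  rw [Fintype.sum_bool, bracketTerm_addMonogon hℓ0 hℓ, bracketTerm_addMonogon hℓ0 hℓ,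
    bracketTerm_eq, hm]
  simp only [if_true, if_false, Bool.false_eq_true, add_zero, Nat.add_sub_cancel,
    ← sub_eq_add_neg]
  exact T_add_one_mul_loop_pow_add _ m

open LaurentPolynomial in
theorem bracket_monogon_pos_general (d : ℕ) (C : Finset (ℤ × ℤ))
    (ℓ : ℤ) (hℓ0 : 0 ≤ ℓ) (hℓ : ℓ ≤ 2 * d) :
    bracket (d + 1)
      (insert (ℓ + 1, ℓ + 2)
        (C.image fun p => ((if p.1 ≤ ℓ then p.1 else p.1 + 2),
                           (if p.2 ≤ ℓ then p.2 else p.2 + 2)))) =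
      (-T 3) * bracket d C :=
  bracket_addMonogon hℓ0 hℓ

open LaurentPolynomial in
/-- birth of a positive monogon: `⟨C₊^ℓ⟩ = (-A³)·⟨C⟩`, where `C₊^ℓ` is obtained
from `C` by replacing each entry `i` by `i` if `i ≤ ℓ` and by `i + 2` if `i > ℓ`, and
adjoining the positive chord `(ℓ+1, ℓ+2)`. -/
theorem bracket_monogon_pos (d : ℕ) (C : Finset (ℤ × ℤ)) (hC : IsOLCD d C)
    (ℓ : ℤ) (hℓ0 : 0 ≤ ℓ) (hℓ : ℓ ≤ 2 * d) :
    bracket (d + 1)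
      (insert (ℓ + 1, ℓ + 2)
        (C.image fun p => ((if p.1 ≤ ℓ then p.1 else p.1 + 2),
                           (if p.2 ≤ ℓ then p.2 else p.2 + 2)))) =
      (-T 3) * bracket d C :=
  bracket_monogon_pos_general d C ℓ hℓ0 hℓ
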